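/- For reciprocal PC matrices C₁, C₂ of the same size n, the matrix compatibility indices satisfy lower-comp(C₁,C₂) ≤ comp(C₁,C₂) ≤ upper-comp(C₁,C₂) ≤ compmax(C₁,C₂). -/

import Mathlib

open Finset

noncomputable def mcomp {n : ℕ} (C1 C2 : Matrix (Fin n) (Fin n) ℝ) : ℝ :=
  (1 / (n : ℝ) ^ 2) * ∑ i, ∑ j, C1 i j * C2 j i

noncomputable def mcompUpper {n : ℕ} (C1 C2 : Matrix (Fin n) (Fin n) ℝ) : ℝ :=
  (2 / ((n : ℝ) * ((n : ℝ) - 1))) *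
    ∑ i, ∑ j, if i < j then max (C1 i j * C2 j i) (C1 j i * C2 i j) else 0

noncomputable def mcompLower {n : ℕ} (C1 C2 : Matrix (Fin n) (Fin n) ℝ) : ℝ :=
  (2 / ((n : ℝ) * ((n : ℝ) - 1))) *
    ∑ i, ∑ j, if i < j then min (C1 i j * C2 j i) (C1 j i * C2 i j) else 0

noncomputable def mcompMax {n : ℕ} (C1 C2 : Matrix (Fin n) (Fin n) ℝ) : ℝ :=
  ⨆ i : Fin n, ⨆ j : Fin n, C1 i j * C2 j i

/-!
Put `a i j = C1 i j * C2 j i`: a positive reciprocal matrix, hence with unit diagonal. Let `P` be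
the number of pairs `i < j` and `L`, `U` the sums of the pairwise minima and maxima of
`a i j, a j i`. Reciprocity gives `min ≤ 1 ≤ max` pairwise, so `L ≤ P ≤ U`, and the full sum of `a`
is `L + U + n` with `n² = 2P + n`. Hence lower-comp `= L / P`, comp `= (L + U + n) / (2P + n)` and
upper-comp `= U / P`: comp is the mediant of `L / P`, `U / P` and `n / n = 1`, so it lies between
`L / P ≤ 1` and `U / P ≥ 1`. Finally every pairwise maximum is at most compmax.
-/

section LtSum

variable {ι M : Type*} [Fintype ι] [LinearOrder ι]

def ltSum [AddCommMonoid M] (g : ι → ι → M) : M :=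
  ∑ i, ∑ j, if i < j then g i j else 0

theorem ltSum_add [AddCommMonoid M] (g h : ι → ι → M) :
    ltSum (fun i j => g i j + h i j) = ltSum g + ltSum h := by
  simp only [ltSum, ← sum_add_distrib, ite_add_zero]

theorem ltSum_const [NonAssocSemiring M] (c : M) :
    ltSum (fun _ _ : ι => c) = c * ltSum (fun _ _ : ι => (1 : M)) := by
  simp only [ltSum, mul_sum, mul_ite, mul_one, mul_zero]

theorem ltSum_le_ltSum {g h : ι → ι → ℝ} (hgh : ∀ i j, i < j → g i j ≤ h i j) :
    ltSum g ≤ ltSum h :=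
  sum_le_sum fun i _ => sum_le_sum fun j _ => by
    split_ifs with hij
    · exact hgh i j hij
    · rfl

theorem sum_sum_eq_ltSum_add_sum_diag [AddCommMonoid M] (f : ι → ι → M) :
    ∑ i, ∑ j, f i j = ltSum (fun i j => f i j + f j i) + ∑ i, f i i := by
  have hsplit : ∀ i j, f i j = ((if i < j then f i j else 0) + if j < i then f i j else 0) +
      if i = j then f i j else 0 := by
    intro i j
    rcases lt_trichotomy i j with h | rfl | h
    · simp [h, h.ne, h.not_gt]
    · simp
    · simp [h, h.ne', h.not_gt]
  have hswap : ltSum (fun i j => f j i) = ∑ i, ∑ j, if j < i then f i j else 0 := sum_comm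
  have hdiag : ∀ i, ∑ j, (if i = j then f i j else 0) = f i i := fun i => by simp
  conv_lhs => rw [sum_congr rfl fun i _ => sum_congr rfl fun j _ => hsplit i j]
  rw [ltSum_add, hswap]
  simp only [sum_add_distrib, hdiag]
  rfl

theorem card_sq_eq_two_mul_ltSum_one_add_card [CommSemiring M] :
    (Fintype.card ι : M) ^ 2 = 2 * ltSum (fun _ _ : ι => (1 : M)) + Fintype.card ι := by
  have h := sum_sum_eq_ltSum_add_sum_diag (fun _ _ : ι => (1 : M))
  simp only [ltSum_add, sum_const, card_univ, nsmul_eq_mul, mul_one] at h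
  rw [sq, h, two_mul]

theorem ltSum_one_pos (h : 2 ≤ Fintype.card ι) : 0 < ltSum (fun _ _ : ι => (1 : ℝ)) := by
  have hcard := card_sq_eq_two_mul_ltSum_one_add_card (ι := ι) (M := ℝ)
  have h' : (2 : ℝ) ≤ Fintype.card ι := by exact_mod_cast h
  nlinarith [sq_nonneg ((Fintype.card ι : ℝ) - 2)]

end LtSum

theorem min_le_one_of_mul_eq_one {x y : ℝ} (h : x * y = 1) : min x y ≤ 1 := by
  by_contra! hlt
  nlinarith [lt_min_iff.mp hlt]

theorem one_le_max_of_mul_eq_one {x y : ℝ} (hx : 0 ≤ x) (h : x * y = 1) : 1 ≤ max x y := by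
  by_contra! hlt
  obtain ⟨hx1, hy1⟩ := max_lt_iff.mp hlt
  nlinarith

section Reciprocal

variable {ι : Type*} [Fintype ι] [LinearOrder ι] {a : ι → ι → ℝ}

theorem sum_sum_eq_ltSum_min_add_ltSum_max_add_card (ha : ∀ i j, 0 < a i j)
    (hrec : ∀ i j, a i j * a j i = 1) :
    ∑ i, ∑ j, a i j = ltSum (fun i j => min (a i j) (a j i)) +
      ltSum (fun i j => max (a i j) (a j i)) + Fintype.card ι := by
  have hdiag : ∀ i, a i i = 1 := fun i => by nlinarith [ha i i, hrec i i]
  simp only [sum_sum_eq_ltSum_add_sum_diag a, hdiag, ← ltSum_add, min_add_max, sum_const,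
    card_univ, nsmul_eq_mul, mul_one]

theorem ltSum_min_le_ltSum_one (hrec : ∀ i j, a i j * a j i = 1) :
    ltSum (fun i j => min (a i j) (a j i)) ≤ ltSum (fun _ _ : ι => (1 : ℝ)) :=
  ltSum_le_ltSum fun i j _ => min_le_one_of_mul_eq_one (hrec i j)

theorem ltSum_one_le_ltSum_max (ha : ∀ i j, 0 < a i j) (hrec : ∀ i j, a i j * a j i = 1) :
    ltSum (fun _ _ : ι => (1 : ℝ)) ≤ ltSum (fun i j => max (a i j) (a j i)) :=
  ltSum_le_ltSum fun i j _ => one_le_max_of_mul_eq_one (ha i j).le (hrec i j)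

theorem ltSum_max_le_iSup_iSup_mul_ltSum_one :
    ltSum (fun i j => max (a i j) (a j i)) ≤
      (⨆ k, ⨆ l, a k l) * ltSum (fun _ _ : ι => (1 : ℝ)) := by
  have hle : ∀ i j, a i j ≤ ⨆ k, ⨆ l, a k l := fun i j =>
    le_ciSup_of_le (Finite.bddAbove_range _) i (le_ciSup (Finite.bddAbove_range _) j)
  rw [← ltSum_const]
  exact ltSum_le_ltSum fun i j _ => max_le (hle i j) (hle j i)

end Reciprocal

open Matrix in
theorem hadamard_transpose_mul_eq_one {ι : Type*} {C1 C2 : Matrix ι ι ℝ}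
    (hrec1 : ∀ i j, C1 i j * C1 j i = 1) (hrec2 : ∀ i j, C2 i j * C2 j i = 1) (i j : ι) :
    (C1 ⊙ C2ᵀ) i j * (C1 ⊙ C2ᵀ) j i = 1 := by
  rw [hadamard_apply, hadamard_apply, transpose_apply, transpose_apply, mul_mul_mul_comm, hrec1,
    mul_comm (C2 j i), hrec2, one_mul]

theorem two_div_natCast_mul_sub_one_mul (n : ℕ) (x : ℝ) :
    2 / ((n : ℝ) * (n - 1)) * x = x / ltSum (fun _ _ : Fin n => (1 : ℝ)) := by
  have hcard := card_sq_eq_two_mul_ltSum_one_add_card (ι := Fin n) (M := ℝ)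
  rw [Fintype.card_fin] at hcard
  rw [show (n : ℝ) * (n - 1) = 2 * ltSum (fun _ _ : Fin n => (1 : ℝ)) by linarith]
  field_simp

section Mediant

variable {L U P N : ℝ}

theorem div_le_add_add_div_two_mul_add (hP : 0 < P) (hN : 0 ≤ N) (hLP : L ≤ P) (hPU : P ≤ U) :
    L / P ≤ (L + U + N) / (2 * P + N) := by
  rw [div_le_div_iff₀ hP (by positivity)]
  nlinarith

theorem add_add_div_two_mul_add_le_div (hP : 0 < P) (hN : 0 ≤ N) (hLP : L ≤ P) (hPU : P ≤ U) :
    (L + U + N) / (2 * P + N) ≤ U / P := by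
  rw [div_le_div_iff₀ (by positivity) hP]
  nlinarith

end Mediant

open Matrix in
theorem mcompat_chain {n : ℕ} (hn : 2 ≤ n) (C1 C2 : Matrix (Fin n) (Fin n) ℝ)
    (h1 : ∀ i j, 0 < C1 i j) (h2 : ∀ i j, 0 < C2 i j)
    (hrec1 : ∀ i j, C1 i j * C1 j i = 1) (hrec2 : ∀ i j, C2 i j * C2 j i = 1) :
    mcompLower C1 C2 ≤ mcomp C1 C2 ∧
      mcomp C1 C2 ≤ mcompUpper C1 C2 ∧
        mcompUpper C1 C2 ≤ mcompMax C1 C2 := by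
  set a := C1 ⊙ C2ᵀ
  have ha : ∀ i j, 0 < a i j := fun i j => mul_pos (h1 i j) (h2 j i)
  have hrec : ∀ i j, a i j * a j i = 1 := hadamard_transpose_mul_eq_one hrec1 hrec2
  set L := ltSum fun i j => min (a i j) (a j i)
  set U := ltSum fun i j => max (a i j) (a j i)
  set P := ltSum fun _ _ : Fin n => (1 : ℝ)
  have hcard : (n : ℝ) ^ 2 = 2 * P + n := by
    simpa using card_sq_eq_two_mul_ltSum_one_add_card (ι := Fin n) (M := ℝ)
  have hP : 0 < P := ltSum_one_pos (by rwa [Fintype.card_fin])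
  have hLower : mcompLower C1 C2 = L / P := two_div_natCast_mul_sub_one_mul n L
  have hUpper : mcompUpper C1 C2 = U / P := two_div_natCast_mul_sub_one_mul n U
  have hComp : mcomp C1 C2 = (L + U + n) / (2 * P + n) := by
    change 1 / (n : ℝ) ^ 2 * ∑ i, ∑ j, a i j = _
    rw [sum_sum_eq_ltSum_min_add_ltSum_max_add_card ha hrec, Fintype.card_fin, ← hcard,
      one_div_mul_eq_div]
  have hLP : L ≤ P := ltSum_min_le_ltSum_one hrec
  have hPU : P ≤ U := ltSum_one_le_ltSum_max ha hrec
  refine ⟨?_, ?_, ?_⟩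
  · rw [hLower, hComp]
    exact div_le_add_add_div_two_mul_add hP n.cast_nonneg hLP hPU
  · rw [hComp, hUpper]
    exact add_add_div_two_mul_add_le_div hP n.cast_nonneg hLP hPU
  · rw [hUpper, div_le_iff₀ hP]
    exact ltSum_max_le_iSup_iSup_mul_ltSum_one
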